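/- arXiv:1012.3978 — 2 statements merged into one kernel-verified Lean document; each statement's English description precedes it below -/
import Mathlib

section
/- For natural numbers n and d with d < n, the identity ∑_{i=0}^{d} i·C(n-d+i-2, i) = (n-d-1)·C(n-1, d-1) holds, where C denotes the binomial coefficient. -/
/-!
Substituting `k = n - d - 1`, the sum becomes `∑ i * C(k+i-1, i)`. Since
`i * C(k+i-1, i) = k * C(k+i-1, i-1)`, it is `k` times the hockey-stick sum
`∑_{j<d} C(k+j, j) = C(k+d, d-1)`.
-/

open Finset

theorem Nat.succ_mul_choose_add_succ (k i : ℕ) :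
    (i + 1) * (k + i).choose (i + 1) = k * (k + i).choose i := by
  rw [mul_comm, Nat.choose_succ_right_eq, Nat.add_sub_cancel, mul_comm]

theorem Nat.sum_range_mul_choose_add_sub_one (k d : ℕ) :
    ∑ i ∈ range (d + 2), i * (k + i - 1).choose i = k * (k + d + 1).choose d := by
  rw [sum_range_succ', zero_mul, add_zero]
  calc ∑ i ∈ range (d + 1), (i + 1) * (k + (i + 1) - 1).choose (i + 1)
      = k * ∑ i ∈ range (d + 1), (i + k).choose k := by
        rw [mul_sum]
        refine sum_congr rfl fun i _ => ?_
        rw [← add_assoc, Nat.add_sub_cancel, succ_mul_choose_add_succ, add_comm i,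
          Nat.choose_symm_add]
    _ = k * (k + d + 1).choose d := by
        rw [sum_range_add_choose, Nat.choose_symm_of_eq_add (by ring), add_comm d k]

/-- `∑_{i=0}^{d} i·C(n-d+i-2, i) = (n-d-1)·C(n-1, d-1)` for `1 ≤ d < n`. -/
theorem stmt2 (n d : ℕ) (hd : 1 ≤ d) (hdn : d < n) :
    ∑ i ∈ Finset.range (d + 1), i * Nat.choose (n - d + i - 2) i
      = (n - d - 1) * Nat.choose (n - 1) (d - 1) := by
  obtain ⟨e, rfl⟩ : ∃ e, d = e + 1 := ⟨d - 1, by omega⟩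
  obtain ⟨k, rfl⟩ : ∃ k, n = k + e + 2 := ⟨n - e - 2, by omega⟩
  have hupper : ∀ i, k + e + 2 - (e + 1) + i - 2 = k + i - 1 := fun i => by omega
  simp only [hupper, Nat.sum_range_mul_choose_add_sub_one]
  congr 1
  all_goals omega
end

section
/- Let A be a 2×n real matrix and b ∈ ℝ², c ∈ ℝⁿ. Suppose y ∈ ℝ² satisfies a_{1i}y₁ + a_{2i}y₂ − c_i ≠ 0 for all i and there exists λ ≠ 0 with b₁ = λ·∑_i a_{1i}/(a_{1i}y₁ + a_{2i}y₂ − c_i) and b₂ = λ·∑_i a_{2i}/(a_{1i}y₁ + a_{2i}y₂ − c_i). Then C(y) = 0, where C(y) = ∑_{i∈I} (b₁a_{2i} − b₂a_{1i}) · ∏_{j∈I∖{i}} (a_{1j}y₁ + a_{2j}y₂ − c_j) and I = {i : b₁a_{2i} − b₂a_{1i} ≠ 0}. -/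
/-! Dividing `C(y)` by `∏_{j ∈ I} (a_{1j}y₁ + a_{2j}y₂ − c_j)` turns it into
`∑_i (b₁a_{2i} − b₂a_{1i}) / (a_{1i}y₁ + a_{2i}y₂ − c_i) = b₁ S₂ − b₂ S₁` (terms outside `I` vanish),
where `S_k = ∑_i a_{ki} / (a_{1i}y₁ + a_{2i}y₂ − c_i)`. The critical equations say `(b₁, b₂) = λ (S₁, S₂)`,
so this is `λ (S₁ S₂ − S₂ S₁) = 0`. -/

open Finset

theorem Finset.sum_mul_prod_erase_eq_sum_div_mul {ι K : Type*} [DecidableEq ι] [Field K]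
    {s : Finset ι} {d : ι → K} (hd : ∀ i ∈ s, d i ≠ 0) (w : ι → K) :
    ∑ i ∈ s, w i * ∏ j ∈ s.erase i, d j = (∑ i ∈ s, w i / d i) * ∏ j ∈ s, d j := by
  rw [sum_mul]
  refine sum_congr rfl fun i hi => ?_
  rw [← mul_prod_erase s d hi, ← mul_assoc, div_mul_cancel₀ _ (hd i hi)]

theorem Finset.sum_mul_sub_mul_eq_zero_of_eq_mul_sum {ι R : Type*} [CommRing R] (s : Finset ι)
    {u v : ι → R} {b₁ b₂ t : R} (h₁ : b₁ = t * ∑ i ∈ s, u i) (h₂ : b₂ = t * ∑ i ∈ s, v i) :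
    ∑ i ∈ s, (b₁ * v i - b₂ * u i) = 0 := by
  rw [sum_sub_distrib, ← mul_sum, ← mul_sum, h₁, h₂]
  ring

open scoped Classical in
theorem stmt11_general (n : ℕ) (a1 a2 c : Fin n → ℝ) (b1 b2 : ℝ) (y1 y2 : ℝ)
    (hden : ∀ i, a1 i * y1 + a2 i * y2 - c i ≠ 0)
    (lam : ℝ)
    (h1 : b1 = lam * ∑ i, a1 i / (a1 i * y1 + a2 i * y2 - c i))
    (h2 : b2 = lam * ∑ i, a2 i / (a1 i * y1 + a2 i * y2 - c i)) :
    ∑ i ∈ Finset.univ.filter (fun i => b1 * a2 i - b2 * a1 i ≠ 0),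
      (b1 * a2 i - b2 * a1 i) *
        ∏ j ∈ (Finset.univ.filter (fun i => b1 * a2 i - b2 * a1 i ≠ 0)).erase i,
          (a1 j * y1 + a2 j * y2 - c j) = 0 := by
  have hcrit : ∑ i, (b1 * a2 i - b2 * a1 i) / (a1 i * y1 + a2 i * y2 - c i) = 0 := by
    simpa only [mul_div_assoc, sub_div] using sum_mul_sub_mul_eq_zero_of_eq_mul_sum univ h1 h2
  rw [sum_mul_prod_erase_eq_sum_div_mul (fun i _ => hden i),
    sum_filter_of_ne fun i _ h => (div_ne_zero_iff.mp h).1, hcrit, zero_mul]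

open scoped Classical in
/-- If `y` is a critical point of the dual logarithmic barrier function (for some `λ ≠ 0`),
then the central curve polynomial `C(y)` vanishes at `y`. -/
theorem stmt11 (n : ℕ) (a1 a2 c : Fin n → ℝ) (b1 b2 : ℝ) (y1 y2 : ℝ)
    (hden : ∀ i, a1 i * y1 + a2 i * y2 - c i ≠ 0)
    (lam : ℝ) (hlam : lam ≠ 0)
    (h1 : b1 = lam * ∑ i, a1 i / (a1 i * y1 + a2 i * y2 - c i))
    (h2 : b2 = lam * ∑ i, a2 i / (a1 i * y1 + a2 i * y2 - c i)) :
    ∑ i ∈ Finset.univ.filter (fun i => b1 * a2 i - b2 * a1 i ≠ 0),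
      (b1 * a2 i - b2 * a1 i) *
        ∏ j ∈ (Finset.univ.filter (fun i => b1 * a2 i - b2 * a1 i ≠ 0)).erase i,
          (a1 j * y1 + a2 j * y2 - c j) = 0 :=
  stmt11_general n a1 a2 c b1 b2 y1 y2 hden lam h1 h2
end
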